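/- For n ≥ 2, let x^k_1 ≤ x^k_2 be nonnegative reals for k = 1,…,n and t_{i1…in} = Σ_k x^k_{ik}. The n-th order interaction contrast c^(n)(t) = Σ (−1)^{n+Σik} h(t − t_{i1…in}) satisfies the recursion: its (n−1)-fold iterated tail integral c^[n](t,∞) equals −∫_{t−x^w_2}^{t−x^w_1} c^[n−1](τ,∞)dτ for any fixed coordinate w, and consequently c^[n](t,∞) ≤ 0 for all t if n is even and c^[n](t,∞) ≥ 0 for all t if n is odd. -/

import Mathlib

noncomputable def heaviside (x : ℝ) : ℝ := if 0 ≤ x then 1 else 0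

/-- The tail cumulative interaction contrast `c^[n+1](t,∞)` for the serial
architecture: `c^[1](t,∞) = c^(1)(t)` and
`c^[n](t,∞) = ∫_t^∞ c^[n−1](τ − x^w_1, ∞) dτ − ∫_t^∞ c^[n−1](τ − x^w_2, ∞) dτ`. -/
noncomputable def ctail (x : ℕ → Fin 2 → ℝ) : ℕ → ℝ → ℝ
  | 0, t => heaviside (t - x 0 0) - heaviside (t - x 0 1)
  | (n + 1), t =>
      (∫ τ in Set.Ioi t, ctail x n (τ - x (n + 1) 0)) -
      (∫ τ in Set.Ioi t, ctail x n (τ - x (n + 1) 1))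

/-!
Shifting the two tail integrals turns each step of the recursion into the window integral
`c ↦ (t ↦ -∫_{t-b}^{t-a} c)` with `a ≤ b`. For `c` integrable and supported in `[L, U]`, the window
integral is continuous and supported in `[L + a, U + b]`, hence integrable again, so the recursion
can be iterated; as the window is positively oriented, the leading minus flips the sign. Starting
from the indicator of `[x^1_1, x^1_2)`, the sign of `c^[n]` is therefore `(-1)^(n-1)`.
-/

open MeasureTheory Set intervalIntegral

theorem setIntegral_Ioi_comp_sub_right (f : ℝ → ℝ) (t c : ℝ) :
    ∫ τ in Ioi t, f (τ - c) = ∫ τ in Ioi (t - c), f τ := by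
  have h := (measurePreserving_sub_right volume c).setIntegral_preimage_emb
    (measurableEmbedding_subRight c) f (Ioi (t - c))
  rwa [preimage_sub_const_Ioi, sub_add_cancel] at h

theorem setIntegral_Ioi_comp_sub_sub_setIntegral_Ioi_comp_sub {f : ℝ → ℝ} (hf : Integrable f)
    (t a b : ℝ) :
    (∫ τ in Ioi t, f (τ - a)) - ∫ τ in Ioi t, f (τ - b) = -∫ τ in (t - b)..(t - a), f τ := by
  rw [setIntegral_Ioi_comp_sub_right, setIntegral_Ioi_comp_sub_right,
    integral_Ioi_sub_Ioi' hf.integrableOn hf.integrableOn, integral_symm]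

theorem continuous_intervalIntegral_sub_sub {f : ℝ → ℝ} (hf : Integrable f) (a b : ℝ) :
    Continuous fun t => ∫ τ in (t - b)..(t - a), f τ := by
  have hprim := hf.continuous_primitive 0
  have hwindow : (fun t => ∫ τ in (t - b)..(t - a), f τ) =
      fun t => (∫ τ in 0..(t - a), f τ) - ∫ τ in 0..(t - b), f τ := by
    funext t
    rw [integral_interval_sub_left hf.intervalIntegrable hf.intervalIntegrable]
  rw [hwindow]
  exact (hprim.comp (continuous_sub_right a)).sub (hprim.comp (continuous_sub_right b))

theorem intervalIntegral_sub_sub_eq_zero_of_notMem_Icc {f : ℝ → ℝ} {L U a b t : ℝ} (hab : a ≤ b)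
    (hf : ∀ τ ∉ Icc L U, f τ = 0) (ht : t ∉ Icc (L + a) (U + b)) :
    ∫ τ in (t - b)..(t - a), f τ = 0 := by
  have hwindow : EqOn f 0 (uIcc (t - b) (t - a)) := by
    intro τ hτ
    rw [uIcc_of_le (by linarith), mem_Icc] at hτ
    rw [mem_Icc, not_and_or, not_le, not_le] at ht
    refine hf τ fun hτLU => ?_
    rcases ht with ht | ht <;> linarith [hτLU.1, hτLU.2]
  rw [integral_congr hwindow]
  simp

theorem MeasureTheory.Integrable.intervalIntegral_sub_sub {f : ℝ → ℝ} (hf : Integrable f) {L U a b : ℝ}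
    (hab : a ≤ b) (hsupp : ∀ τ ∉ Icc L U, f τ = 0) :
    Integrable fun t => ∫ τ in (t - b)..(t - a), f τ :=
  (continuous_intervalIntegral_sub_sub hf a b).integrable_of_hasCompactSupport <|
    HasCompactSupport.intro isCompact_Icc fun _ ht =>
      intervalIntegral_sub_sub_eq_zero_of_notMem_Icc hab hsupp ht

variable {x : ℕ → Fin 2 → ℝ}

theorem ctail_zero_eq_indicator (hx : x 0 0 ≤ x 0 1) :
    ctail x 0 = (Ico (x 0 0) (x 0 1)).indicator 1 := by
  funext t
  simp only [ctail, heaviside, sub_nonneg, indicator_apply, mem_Ico, Pi.one_apply]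
  by_cases h0 : x 0 0 ≤ t <;> by_cases h1 : x 0 1 ≤ t <;> simp [h0, h1]; linarith

theorem ctail_succ_eq {n : ℕ} (hint : Integrable (ctail x n)) (t : ℝ) :
    ctail x (n + 1) t = -∫ τ in (t - x (n + 1) 1)..(t - x (n + 1) 0), ctail x n τ :=
  setIntegral_Ioi_comp_sub_sub_setIntegral_Ioi_comp_sub hint t _ _

theorem integrable_ctail_and_eq_zero_of_notMem_Icc (hx : ∀ k, x k 0 ≤ x k 1) (n : ℕ) :
    Integrable (ctail x n) ∧
      ∀ t ∉ Icc (∑ k ∈ Finset.range (n + 1), x k 0) (∑ k ∈ Finset.range (n + 1), x k 1),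
        ctail x n t = 0 := by
  induction n with
  | zero =>
    rw [ctail_zero_eq_indicator (hx 0)]
    refine ⟨(integrable_indicator_iff measurableSet_Ico).2
      (integrableOn_const measure_Ico_lt_top.ne), fun t ht => ?_⟩
    simp only [zero_add, Finset.sum_range_one] at ht
    exact indicator_of_notMem (fun h => ht (Ico_subset_Icc_self h)) _
  | succ n ih =>
    obtain ⟨hint, hsupp⟩ := ih
    rw [funext (ctail_succ_eq hint), Finset.sum_range_succ _ (n + 1), Finset.sum_range_succ _ (n + 1)]
    refine ⟨(hint.intervalIntegral_sub_sub (hx _) hsupp).neg, fun t ht => ?_⟩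
    dsimp only
    rw [intervalIntegral_sub_sub_eq_zero_of_notMem_Icc (hx _) hsupp ht, neg_zero]

theorem integrable_ctail (hx : ∀ k, x k 0 ≤ x k 1) (n : ℕ) : Integrable (ctail x n) :=
  (integrable_ctail_and_eq_zero_of_notMem_Icc hx n).1

theorem neg_one_pow_mul_ctail_nonneg (hx : ∀ k, x k 0 ≤ x k 1) (n : ℕ) (t : ℝ) :
    0 ≤ (-1) ^ n * ctail x n t := by
  induction n generalizing t with
  | zero => simp [ctail_zero_eq_indicator (hx 0), indicator_nonneg]
  | succ n ih =>
    have hwindow : t - x (n + 1) 1 ≤ t - x (n + 1) 0 := by linarith [hx (n + 1)]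
    calc 0 ≤ ∫ τ in (t - x (n + 1) 1)..(t - x (n + 1) 0), (-1) ^ n * ctail x n τ :=
          integral_nonneg hwindow fun τ _ => ih τ
      _ = (-1) ^ (n + 1) * ctail x (n + 1) t := by
          rw [intervalIntegral.integral_const_mul, ctail_succ_eq (integrable_ctail hx n)]
          ring

theorem stmt16_general (x : ℕ → Fin 2 → ℝ)
    (hx : ∀ k, x k 0 ≤ x k 1) :
    ∀ m : ℕ, 1 ≤ m →
      (∀ t, ctail x m t = -(∫ τ in (t - x m 1)..(t - x m 0), ctail x (m - 1) τ)) ∧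
      (Even (m + 1) → ∀ t, ctail x m t ≤ 0) ∧
      (Odd (m + 1) → ∀ t, 0 ≤ ctail x m t) := by
  intro m hm
  obtain ⟨n, rfl⟩ := Nat.exists_eq_add_of_le' hm
  have hsign := neg_one_pow_mul_ctail_nonneg hx (n + 1)
  refine ⟨ctail_succ_eq (integrable_ctail hx n), fun heven t => ?_, fun hodd t => ?_⟩
  · have hodd : Odd (n + 1) := Nat.not_even_iff_odd.mp (Nat.even_add_one.mp heven)
    simpa [hodd.neg_one_pow] using hsign t
  · have heven : Even (n + 1) := Nat.not_odd_iff_even.mp (Nat.odd_add_one.mp hodd)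
    simpa [heven.neg_one_pow] using hsign t

theorem stmt16 (x : ℕ → Fin 2 → ℝ)
    (hx0 : ∀ k, 0 ≤ x k 0) (hx : ∀ k, x k 0 ≤ x k 1) :
    ∀ m : ℕ, 1 ≤ m →
      (∀ t, ctail x m t = -(∫ τ in (t - x m 1)..(t - x m 0), ctail x (m - 1) τ)) ∧
      (Even (m + 1) → ∀ t, ctail x m t ≤ 0) ∧
      (Odd (m + 1) → ∀ t, 0 ≤ ctail x m t) :=
  stmt16_general x hx
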